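/- Let d ∈ ℕ, A a nonempty finite set, η, c, K ∈ [0,∞), L₁, L₂ ∈ [0,∞) with cL₁ < 1, cL₂ < 1, and ηL₂ < 1, let w : ℝ^d → (0,∞) be measurable. Let f₁, f₂ : ℝ^d × ℝ^A → ℝ be measurable with |fᵢ(x,r)−fᵢ(x,s)| ≤ Lᵢ max_a |r(a)−s(a)| (i=1,2) and |f₂(x,r)−f₂(y,r)| ≤ K‖x−y‖. Let κᵢ^{(a)} (i=1,2, a∈A) be stochastic kernels with ∫ w dκᵢ^{(a)}(x,·) ≤ c·w(x), sup_{x,a} w(x)^{-1} ∫ |fᵢ(y,0)| κᵢ^{(a)}(x,dy) < ∞, sup_{x,a} w(x)^{-1} ∫ ‖y‖ κᵢ^{(a)}(x,dy) < ∞, and W₁(κ₂^{(a)}(x,·), κ₂^{(a)}(y,·)) ≤ η‖x−y‖. Then, with u₁, u₂ the unique w-bounded fixed points of the respective equations (uᵢ(x))(a) = ∫ fᵢ(y,uᵢ(y)) κᵢ^{(a)}(x,dy), it holds that sup_{(x,a)} |u₁(x)(a)−u₂(x)(a)|/w(x) ≤ (c/(1−c·min{L₁,L₂})) · sup_{(y,r)}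 |f₁(y,r)−f₂(y,r)|/w(y) + (K/((1−ηL₂)(1−cL₂))) · sup_{(y,b)} W₁(κ₁^{(b)}(y,·), κ₂^{(b)}(y,·))/w(y). -/

import Mathlib

/-!
Each Picard iterate of the equation for `u₂`, started at `0`, is `η M`-Lipschitz with
`M = K / (1 - η L₂)`: integrating an `M`-Lipschitz function against `κ₂ a x` and `κ₂ a y` differs
by at most `M W₁(κ₂ a x, κ₂ a y)`. The iterates converge to `u₂` in the `w`-weighted sup norm at
rate `(c L₂)ⁿ`, so `u₂` is `η M`-Lipschitz and `y ↦ f₂ y (u₂ y)` is `M`-Lipschitz. Passing from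
`u₁ = ∫ f₁(u₁) dκ₁` to `u₂ = ∫ f₂(u₂) dκ₂` through `∫ f₂(u₂) dκ₁`, the weighted distance `S` of
`u₁` and `u₂` satisfies `S ≤ c min(L₁, L₂) S + c D₁ + M D₂`; the minimum comes from comparing
`f₁(u₁)` with `f₂(u₂)` through either `f₁(u₂)` or `f₂(u₁)`.
-/

open MeasureTheory ProbabilityTheory

noncomputable def W1 {d : ℕ} (μ ν : Measure (EuclideanSpace ℝ (Fin d))) : ℝ :=
  sInf { r : ℝ | ∃ π : Measure (EuclideanSpace ℝ (Fin d) × EuclideanSpace ℝ (Fin d)),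
    IsProbabilityMeasure π ∧ π.map Prod.fst = μ ∧ π.map Prod.snd = ν ∧
    r = ∫ p, ‖p.1 - p.2‖ ∂π }

lemma W1_nonneg {d : ℕ} (μ ν : Measure (EuclideanSpace ℝ (Fin d))) : 0 ≤ W1 μ ν :=
  Real.sInf_nonneg fun _ ⟨_, _, _, _, hr⟩ => hr ▸ integral_nonneg fun _ => norm_nonneg _

section Lipschitz

variable {E : Type*} [NormedAddCommGroup E]

lemma continuous_of_abs_sub_le_mul_norm {g : E → ℝ} {M : ℝ}
    (hg : ∀ x y, |g x - g y| ≤ M * ‖x - y‖) : Continuous g :=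
  (LipschitzWith.of_dist_le' (K := M) fun x y => by
    rw [Real.dist_eq, dist_eq_norm]; exact hg x y).continuous

lemma integrable_of_abs_sub_le_mul_norm [MeasurableSpace E] [OpensMeasurableSpace E]
    {μ : Measure E} [IsFiniteMeasure μ] {g : E → ℝ} {M : ℝ}
    (hg : ∀ x y, |g x - g y| ≤ M * ‖x - y‖) (hmom : Integrable (fun y => ‖y‖) μ) :
    Integrable g μ := by
  refine ((integrable_const |g 0|).add (hmom.const_mul M)).mono'
    (continuous_of_abs_sub_le_mul_norm hg).aestronglyMeasurable (ae_of_all _ fun y => ?_)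
  have h := hg y 0
  rw [sub_zero] at h
  have := abs_sub_abs_le_abs_sub (g y) (g 0)
  simp only [Real.norm_eq_abs, Pi.add_apply]
  linarith

lemma abs_integral_sub_integral_le_of_coupling [MeasurableSpace E] [BorelSpace E]
    [SecondCountableTopology E] {μ ν : Measure E} {π : Measure (E × E)} [IsFiniteMeasure π]
    (hπ₁ : π.map Prod.fst = μ) (hπ₂ : π.map Prod.snd = ν) {g : E → ℝ} {M : ℝ}
    (hg : ∀ x y, |g x - g y| ≤ M * ‖x - y‖)
    (hmomμ : Integrable (fun y => ‖y‖) μ) (hmomν : Integrable (fun y => ‖y‖) ν) :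
    |∫ y, g y ∂μ - ∫ y, g y ∂ν| ≤ M * ∫ p, ‖p.1 - p.2‖ ∂π := by
  have hgc := continuous_of_abs_sub_le_mul_norm hg
  have hfst : ∀ {h : E → ℝ}, Continuous h → Integrable h μ → Integrable (fun p => h p.1) π :=
    fun hc hi => (integrable_map_measure hc.aestronglyMeasurable
      measurable_fst.aemeasurable).mp (hπ₁ ▸ hi)
  have hsnd : ∀ {h : E → ℝ}, Continuous h → Integrable h ν → Integrable (fun p => h p.2) π :=
    fun hc hi => (integrable_map_measure hc.aestronglyMeasurable
      measurable_snd.aemeasurable).mp (hπ₂ ▸ hi)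
  have hμ : IsFiniteMeasure μ := hπ₁ ▸ inferInstance
  have hν : IsFiniteMeasure ν := hπ₂ ▸ inferInstance
  have hg₁ := hfst hgc (integrable_of_abs_sub_le_mul_norm hg hmomμ)
  have hg₂ := hsnd hgc (integrable_of_abs_sub_le_mul_norm hg hmomν)
  have hdist : Integrable (fun p : E × E => ‖p.1 - p.2‖) π :=
    ((hfst continuous_norm hmomμ).add (hsnd continuous_norm hmomν)).mono'
      (continuous_fst.sub continuous_snd).norm.aestronglyMeasurable
      (ae_of_all _ fun p => by simpa using norm_sub_le p.1 p.2)
  rw [← hπ₁, ← hπ₂, integral_map measurable_fst.aemeasurable hgc.aestronglyMeasurable,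
    integral_map measurable_snd.aemeasurable hgc.aestronglyMeasurable,
    ← integral_sub hg₁ hg₂, ← integral_const_mul]
  exact (abs_integral_le_integral_abs).trans
    (integral_mono (hg₁.sub hg₂).abs (hdist.const_mul M) fun p => hg p.1 p.2)

end Lipschitz

open scoped Pointwise in
lemma abs_integral_sub_integral_le_mul_W1 {d : ℕ} {μ ν : Measure (EuclideanSpace ℝ (Fin d))}
    [IsProbabilityMeasure μ] [IsProbabilityMeasure ν] {g : EuclideanSpace ℝ (Fin d) → ℝ}
    {M : ℝ} (hM : 0 ≤ M) (hg : ∀ x y, |g x - g y| ≤ M * ‖x - y‖)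
    (hmomμ : Integrable (fun y => ‖y‖) μ) (hmomν : Integrable (fun y => ‖y‖) ν) :
    |∫ y, g y ∂μ - ∫ y, g y ∂ν| ≤ M * W1 μ ν := by
  rw [W1, ← smul_eq_mul, ← Real.sInf_smul_of_nonneg hM]
  refine le_csInf (Set.Nonempty.smul_set ⟨_, μ.prod ν, inferInstance, by simp, by simp, rfl⟩) ?_
  rintro _ ⟨_, ⟨π, _, hπ₁, hπ₂, rfl⟩, rfl⟩
  exact abs_integral_sub_integral_le_of_coupling hπ₁ hπ₂ hg hmomμ hmomν

section FixedPoint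

variable {X A : Type*}

lemma abs_sub_le_mul_of_forall_abs_sub_le [Nonempty A] {F : (A → ℝ) → ℝ} {L B : ℝ}
    (hL : 0 ≤ L) (hF : ∀ r s, |F r - F s| ≤ L * ⨆ a, |r a - s a|) {r s : A → ℝ}
    (hrs : ∀ a, |r a - s a| ≤ B) : |F r - F s| ≤ L * B :=
  (hF r s).trans (mul_le_mul_of_nonneg_left (ciSup_le hrs) hL)

lemma abs_sub_le_min_mul_add [Nonempty A] {F₁ F₂ : (A → ℝ) → ℝ} {L₁ L₂ D B : ℝ}
    (hL₁ : 0 ≤ L₁) (hL₂ : 0 ≤ L₂) (hF₁ : ∀ r s, |F₁ r - F₁ s| ≤ L₁ * ⨆ a, |r a - s a|)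
    (hF₂ : ∀ r s, |F₂ r - F₂ s| ≤ L₂ * ⨆ a, |r a - s a|) (hF : ∀ r, |F₁ r - F₂ r| ≤ D)
    {r s : A → ℝ} (hrs : ∀ a, |r a - s a| ≤ B) : |F₁ r - F₂ s| ≤ min L₁ L₂ * B + D := by
  rcases le_total L₁ L₂ with h | h
  · rw [min_eq_left h]
    calc |F₁ r - F₂ s| ≤ |F₁ r - F₁ s| + |F₁ s - F₂ s| := abs_sub_le _ _ _
      _ ≤ L₁ * B + D := add_le_add (abs_sub_le_mul_of_forall_abs_sub_le hL₁ hF₁ hrs) (hF s)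
  · rw [min_eq_right h]
    calc |F₁ r - F₂ s| ≤ |F₁ r - F₂ r| + |F₂ r - F₂ s| := abs_sub_le _ _ _
      _ ≤ L₂ * B + D := by
        linarith [abs_sub_le_mul_of_forall_abs_sub_le hL₂ hF₂ hrs, hF r]

lemma abs_integral_sub_integral_le_of_abs_sub_le_mul [MeasurableSpace X] {μ : Measure X}
    {w h₁ h₂ : X → ℝ} {b M : ℝ} (hb : 0 ≤ b) (hw : Integrable w μ) (hwM : ∫ y, w y ∂μ ≤ M)
    (hh₁ : Integrable h₁ μ) (hh₂ : Integrable h₂ μ) (h : ∀ y, |h₁ y - h₂ y| ≤ b * w y) :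
    |∫ y, h₁ y ∂μ - ∫ y, h₂ y ∂μ| ≤ b * M := by
  rw [← integral_sub hh₁ hh₂]
  calc |∫ y, (h₁ y - h₂ y) ∂μ| ≤ ∫ y, |h₁ y - h₂ y| ∂μ := abs_integral_le_integral_abs
    _ ≤ ∫ y, b * w y ∂μ := integral_mono (hh₁.sub hh₂).abs (hw.const_mul b) h
    _ ≤ b * M := by rw [integral_const_mul]; exact mul_le_mul_of_nonneg_left hwM hb

lemma abs_le_div_one_sub_mul_of_bound_improves {g : X → A → ℝ} {w : X → ℝ} {q R : ℝ}
    (hw : ∀ x, 0 < w x) (hq : q < 1) (hbdd : ∃ C, ∀ x a, |g x a| ≤ C * w x)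
    (himp : ∀ S, 0 ≤ S → (∀ x a, |g x a| ≤ S * w x) → ∀ x a, |g x a| ≤ (q * S + R) * w x)
    (x : X) (a : A) : |g x a| ≤ R / (1 - q) * w x := by
  obtain ⟨C, hC⟩ := hbdd
  set S := ⨆ p : X × A, |g p.1 p.2| / w p.1
  have hbddS : BddAbove (Set.range fun p : X × A => |g p.1 p.2| / w p.1) :=
    ⟨C, by rintro _ ⟨p, rfl⟩; exact (div_le_iff₀ (hw p.1)).2 (hC p.1 p.2)⟩
  have hS : ∀ x a, |g x a| ≤ S * w x := fun x a =>
    (div_le_iff₀ (hw x)).1 (le_ciSup hbddS (x, a))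
  have hS₀ : 0 ≤ S := Real.iSup_nonneg fun p => div_nonneg (abs_nonneg _) (hw p.1).le
  have : Nonempty (X × A) := ⟨(x, a)⟩
  have hSle : S ≤ q * S + R :=
    ciSup_le fun p => (div_le_iff₀ (hw p.1)).2 (himp S hS₀ hS p.1 p.2)
  calc |g x a| ≤ S * w x := hS x a
    _ ≤ R / (1 - q) * w x := by
      gcongr
      · exact (hw x).le
      · rw [le_div_iff₀ (by linarith)]; linarith

lemma exists_abs_sub_le_mul {u v : X → A → ℝ} {w : X → ℝ}
    (hu : ∃ C, ∀ x a, |u x a| ≤ C * w x) (hv : ∃ C, ∀ x a, |v x a| ≤ C * w x) :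
    ∃ C, ∀ x a, |u x a - v x a| ≤ C * w x := by
  obtain ⟨C₁, hC₁⟩ := hu
  obtain ⟨C₂, hC₂⟩ := hv
  exact ⟨C₁ + C₂, fun x a => by linarith [abs_sub (u x a) (v x a), hC₁ x a, hC₂ x a]⟩

noncomputable def picardIter [MeasurableSpace X] (f : X → (A → ℝ) → ℝ) (κ : A → Kernel X X) :
    ℕ → X → A → ℝ
  | 0 => 0
  | n + 1 => fun x a => ∫ y, f y (picardIter f κ n y) ∂(κ a x)

lemma abs_picardIter_sub_le [MeasurableSpace X] [Nonempty A] {f : X → (A → ℝ) → ℝ}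
    {κ : A → Kernel X X} {w : X → ℝ} {c L C : ℝ} (hc : 0 ≤ c) (hL : 0 ≤ L) (hC : 0 ≤ C)
    (hf : ∀ x r s, |f x r - f x s| ≤ L * ⨆ a, |r a - s a|)
    (hwint : ∀ a x, Integrable w (κ a x)) (hwbd : ∀ a x, ∫ y, w y ∂(κ a x) ≤ c * w x)
    (hint : ∀ n a x, Integrable (fun y => f y (picardIter f κ n y)) (κ a x))
    {u : X → A → ℝ} (hu : ∀ x a, |u x a| ≤ C * w x)
    (huint : ∀ a x, Integrable (fun y => f y (u y)) (κ a x))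
    (hufix : ∀ a x, u x a = ∫ y, f y (u y) ∂(κ a x)) (n : ℕ) :
    ∀ x a, |picardIter f κ n x a - u x a| ≤ (c * L) ^ n * C * w x := by
  induction n with
  | zero => intro x a; simpa [picardIter, abs_sub_comm] using hu x a
  | succ n ih =>
    intro x a
    rw [hufix a x]
    calc |picardIter f κ (n + 1) x a - ∫ y, f y (u y) ∂(κ a x)|
        ≤ L * ((c * L) ^ n * C) * (c * w x) :=
          abs_integral_sub_integral_le_of_abs_sub_le_mul (by positivity) (hwint a x) (hwbd a x)
            (hint n a x) (huint a x) fun y => by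
              simpa only [mul_assoc] using abs_sub_le_mul_of_forall_abs_sub_le hL (hf y) (ih y)
      _ = (c * L) ^ (n + 1) * C * w x := by ring

lemma abs_comp_sub_comp_le [SeminormedAddCommGroup X] [Nonempty A] {f : X → (A → ℝ) → ℝ}
    {K L Λ : ℝ} (hL : 0 ≤ L) (hf : ∀ x r s, |f x r - f x s| ≤ L * ⨆ a, |r a - s a|)
    (hfx : ∀ x y r, |f x r - f y r| ≤ K * ‖x - y‖) {v : X → A → ℝ}
    (hv : ∀ x y a, |v x a - v y a| ≤ Λ * ‖x - y‖) (x y : X) :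
    |f x (v x) - f y (v y)| ≤ (K + L * Λ) * ‖x - y‖ :=
  calc |f x (v x) - f y (v y)| ≤ |f x (v x) - f y (v x)| + |f y (v x) - f y (v y)| :=
        abs_sub_le _ _ _
    _ ≤ K * ‖x - y‖ + L * (Λ * ‖x - y‖) :=
        add_le_add (hfx x y _) (abs_sub_le_mul_of_forall_abs_sub_le hL (hf y) (hv x y))
    _ = (K + L * Λ) * ‖x - y‖ := by ring

end FixedPoint

lemma add_mul_mul_div_one_sub {η K L : ℝ} (hηL : η * L < 1) :
    K + L * (η * (K / (1 - η * L))) = K / (1 - η * L) := by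
  linear_combination -div_mul_cancel₀ K (sub_pos.2 hηL).ne'

lemma abs_integral_sub_integral_le_add_mul_W1 {d : ℕ} {A : Type*} [Nonempty A]
    {μ₁ μ₂ : Measure (EuclideanSpace ℝ (Fin d))} [IsProbabilityMeasure μ₁]
    [IsProbabilityMeasure μ₂] {f₁ f₂ : EuclideanSpace ℝ (Fin d) → (A → ℝ) → ℝ}
    {w : EuclideanSpace ℝ (Fin d) → ℝ} {L₁ L₂ D S M : ℝ} (hL₁ : 0 ≤ L₁) (hL₂ : 0 ≤ L₂)
    (hD : 0 ≤ D) (hS : 0 ≤ S) (hM : 0 ≤ M)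
    (hf₁ : ∀ y r s, |f₁ y r - f₁ y s| ≤ L₁ * ⨆ a, |r a - s a|)
    (hf₂ : ∀ y r s, |f₂ y r - f₂ y s| ≤ L₂ * ⨆ a, |r a - s a|)
    (hf : ∀ y r, |f₁ y r - f₂ y r| ≤ D * w y) {r s : EuclideanSpace ℝ (Fin d) → A → ℝ}
    (hrs : ∀ y a, |r y a - s y a| ≤ S * w y)
    (hs : ∀ y z, |f₂ y (s y) - f₂ z (s z)| ≤ M * ‖y - z‖) (hw : Integrable w μ₁)
    (hr : Integrable (fun y => f₁ y (r y)) μ₁)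
    (hmom₁ : Integrable (fun y => ‖y‖) μ₁) (hmom₂ : Integrable (fun y => ‖y‖) μ₂) :
    |∫ y, f₁ y (r y) ∂μ₁ - ∫ y, f₂ y (s y) ∂μ₂| ≤
      (min L₁ L₂ * S + D) * ∫ y, w y ∂μ₁ + M * W1 μ₁ μ₂ := by
  have hnonlin : |∫ y, f₁ y (r y) ∂μ₁ - ∫ y, f₂ y (s y) ∂μ₁| ≤
      (min L₁ L₂ * S + D) * ∫ y, w y ∂μ₁ :=
    abs_integral_sub_integral_le_of_abs_sub_le_mul (by positivity) hw le_rfl hr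
      (integrable_of_abs_sub_le_mul_norm hs hmom₁) fun y => by
        simpa only [add_mul, mul_assoc] using
          abs_sub_le_min_mul_add hL₁ hL₂ (hf₁ y) (hf₂ y) (hf y) (hrs y)
  exact (abs_sub_le _ (∫ y, f₂ y (s y) ∂μ₁) _).trans
    (add_le_add hnonlin (abs_integral_sub_integral_le_mul_W1 hM hs hmom₁ hmom₂))

section Euclidean

variable {d : ℕ} {A : Type*} [Nonempty A] {f : EuclideanSpace ℝ (Fin d) → (A → ℝ) → ℝ}
  {κ : A → Kernel (EuclideanSpace ℝ (Fin d)) (EuclideanSpace ℝ (Fin d))}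
  [∀ a, IsMarkovKernel (κ a)] {η K L : ℝ}

lemma abs_picardIter_sub_picardIter_le (hη : 0 ≤ η) (hK : 0 ≤ K) (hL : 0 ≤ L) (hηL : η * L < 1)
    (hf : ∀ x r s, |f x r - f x s| ≤ L * ⨆ a, |r a - s a|)
    (hfx : ∀ x y r, |f x r - f y r| ≤ K * ‖x - y‖)
    (hmom : ∀ a x, Integrable (fun y => ‖y‖) (κ a x))
    (hκ : ∀ a x y, W1 (κ a x) (κ a y) ≤ η * ‖x - y‖) (n : ℕ) :
    ∀ x y a, |picardIter f κ n x a - picardIter f κ n y a| ≤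
      η * (K / (1 - η * L)) * ‖x - y‖ := by
  have hM : 0 ≤ K / (1 - η * L) := div_nonneg hK (by linarith)
  induction n with
  | zero =>
    intro x y a
    simpa [picardIter] using mul_nonneg (mul_nonneg hη hM) (norm_nonneg _)
  | succ n ih =>
    intro x y a
    have hg := abs_comp_sub_comp_le hL hf hfx ih
    rw [add_mul_mul_div_one_sub hηL] at hg
    calc _ ≤ K / (1 - η * L) * W1 (κ a x) (κ a y) :=
          abs_integral_sub_integral_le_mul_W1 hM hg (hmom a x) (hmom a y)
      _ ≤ K / (1 - η * L) * (η * ‖x - y‖) := mul_le_mul_of_nonneg_left (hκ a x y) hM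
      _ = η * (K / (1 - η * L)) * ‖x - y‖ := by ring

lemma abs_fixedPoint_sub_le {c : ℝ} (hη : 0 ≤ η) (hc : 0 ≤ c) (hK : 0 ≤ K) (hL : 0 ≤ L)
    (hcL : c * L < 1) (hηL : η * L < 1) {w : EuclideanSpace ℝ (Fin d) → ℝ} (hw : ∀ x, 0 < w x)
    (hf : ∀ x r s, |f x r - f x s| ≤ L * ⨆ a, |r a - s a|)
    (hfx : ∀ x y r, |f x r - f y r| ≤ K * ‖x - y‖)
    (hwint : ∀ a x, Integrable w (κ a x)) (hwbd : ∀ a x, ∫ y, w y ∂(κ a x) ≤ c * w x)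
    (hmom : ∀ a x, Integrable (fun y => ‖y‖) (κ a x))
    (hκ : ∀ a x y, W1 (κ a x) (κ a y) ≤ η * ‖x - y‖)
    {u : EuclideanSpace ℝ (Fin d) → A → ℝ} (hubdd : ∃ C, ∀ x a, |u x a| ≤ C * w x)
    (huint : ∀ a x, Integrable (fun y => f y (u y)) (κ a x))
    (hufix : ∀ a x, u x a = ∫ y, f y (u y) ∂(κ a x)) (x y : EuclideanSpace ℝ (Fin d)) (a : A) :
    |u x a - u y a| ≤ η * (K / (1 - η * L)) * ‖x - y‖ := by
  obtain ⟨C, hC⟩ := hubdd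
  have hC₀ : ∀ x a, |u x a| ≤ max C 0 * w x := fun x a =>
    (hC x a).trans (mul_le_mul_of_nonneg_right (le_max_left _ _) (hw x).le)
  have hlip := abs_picardIter_sub_picardIter_le hη hK hL hηL hf hfx hmom hκ
  have hconv := abs_picardIter_sub_le hc hL (le_max_right C 0) hf hwint hwbd
    (fun n a x => integrable_of_abs_sub_le_mul_norm (abs_comp_sub_comp_le hL hf hfx (hlip n))
      (hmom a x)) hC₀ huint hufix
  have hbound : ∀ n : ℕ, |u x a - u y a| ≤
      η * (K / (1 - η * L)) * ‖x - y‖ + (c * L) ^ n * (max C 0 * (w x + w y)) := fun n => by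
    have hx := hconv n x a
    have hy := hconv n y a
    rw [abs_sub_comm] at hx
    linarith [abs_sub_le (u x a) (picardIter f κ n x a) (u y a),
      abs_sub_le (picardIter f κ n x a) (picardIter f κ n y a) (u y a), hlip n x y a]
  have hlim : Filter.Tendsto (fun n : ℕ =>
      η * (K / (1 - η * L)) * ‖x - y‖ + (c * L) ^ n * (max C 0 * (w x + w y)))
      Filter.atTop (nhds (η * (K / (1 - η * L)) * ‖x - y‖)) := by
    simpa using ((tendsto_pow_atTop_nhds_zero_of_lt_one (mul_nonneg hc hL) hcL).mul_const
      (max C 0 * (w x + w y))).const_add (η * (K / (1 - η * L)) * ‖x - y‖)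
  exact ge_of_tendsto' hlim hbound

end Euclidean

theorem stmt_3_general {d : ℕ} {A : Type*}
    (η c K L₁ L₂ : ℝ) (hη : 0 ≤ η) (hc : 0 ≤ c) (hK : 0 ≤ K)
    (hL₁ : 0 ≤ L₁) (hL₂ : 0 ≤ L₂)
    (hcL₁ : c * L₁ < 1) (hcL₂ : c * L₂ < 1) (hηL₂ : η * L₂ < 1)
    (w : EuclideanSpace ℝ (Fin d) → ℝ) (hwpos : ∀ x, 0 < w x)
    (f₁ f₂ : EuclideanSpace ℝ (Fin d) → (A → ℝ) → ℝ)
    (hf₁lip : ∀ x r s, |f₁ x r - f₁ x s| ≤ L₁ * ⨆ a, |r a - s a|)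
    (hf₂lip : ∀ x r s, |f₂ x r - f₂ x s| ≤ L₂ * ⨆ a, |r a - s a|)
    (hf₂xlip : ∀ x y r, |f₂ x r - f₂ y r| ≤ K * ‖x - y‖)
    (κ₁ κ₂ : A → Kernel (EuclideanSpace ℝ (Fin d)) (EuclideanSpace ℝ (Fin d)))
    (hκ₁ : ∀ a, IsMarkovKernel (κ₁ a)) (hκ₂ : ∀ a, IsMarkovKernel (κ₂ a))
    (hwint₁ : ∀ a x, Integrable w (κ₁ a x)) (hwint₂ : ∀ a x, Integrable w (κ₂ a x))
    (hwbd₁ : ∀ a x, ∫ y, w y ∂(κ₁ a x) ≤ c * w x)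
    (hwbd₂ : ∀ a x, ∫ y, w y ∂(κ₂ a x) ≤ c * w x)
    (hmom₁ : ∀ a x, Integrable (fun y => ‖y‖) (κ₁ a x))
    (hmom₂ : ∀ a x, Integrable (fun y => ‖y‖) (κ₂ a x))
    (hκ₂lip : ∀ a x y, W1 (κ₂ a x) (κ₂ a y) ≤ η * ‖x - y‖)
    (u₁ u₂ : EuclideanSpace ℝ (Fin d) → A → ℝ)
    (hu₁bdd : ∃ C, ∀ x a, |u₁ x a| ≤ C * w x)
    (hu₂bdd : ∃ C, ∀ x a, |u₂ x a| ≤ C * w x)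
    (hu₁int : ∀ a x, Integrable (fun y => f₁ y (u₁ y)) (κ₁ a x))
    (hu₂int : ∀ a x, Integrable (fun y => f₂ y (u₂ y)) (κ₂ a x))
    (hu₁fix : ∀ a x, u₁ x a = ∫ y, f₁ y (u₁ y) ∂(κ₁ a x))
    (hu₂fix : ∀ a x, u₂ x a = ∫ y, f₂ y (u₂ y) ∂(κ₂ a x))
    (D₁ : ℝ) (hD₁ : ∀ y r, |f₁ y r - f₂ y r| ≤ D₁ * w y)
    (D₂ : ℝ) (hD₂ : ∀ b y, W1 (κ₁ b y) (κ₂ b y) ≤ D₂ * w y) :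
    ∀ x a, |u₁ x a - u₂ x a| ≤
      c / (1 - c * min L₁ L₂) * D₁ * w x
        + K / ((1 - η * L₂) * (1 - c * L₂)) * D₂ * w x := by
  intro x a
  have : Nonempty A := ⟨a⟩
  set M := K / (1 - η * L₂)
  have hM : 0 ≤ M := div_nonneg hK (by linarith)
  have hg : ∀ y z, |f₂ y (u₂ y) - f₂ z (u₂ z)| ≤ M * ‖y - z‖ := by
    simpa only [add_mul_mul_div_one_sub hηL₂] using abs_comp_sub_comp_le hL₂ hf₂lip hf₂xlip
      (abs_fixedPoint_sub_le hη hc hK hL₂ hcL₂ hηL₂ hwpos hf₂lip hf₂xlip hwint₂ hwbd₂ hmom₂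
        hκ₂lip hu₂bdd hu₂int hu₂fix)
  have hD₁₀ : 0 ≤ D₁ := nonneg_of_mul_nonneg_left ((abs_nonneg _).trans (hD₁ x 0)) (hwpos x)
  have hD₂₀ : 0 ≤ D₂ := nonneg_of_mul_nonneg_left ((W1_nonneg _ _).trans (hD₂ a x)) (hwpos x)
  have hstep : ∀ S, 0 ≤ S → (∀ x a, |u₁ x a - u₂ x a| ≤ S * w x) →
      ∀ x a, |u₁ x a - u₂ x a| ≤ (c * min L₁ L₂ * S + (c * D₁ + M * D₂)) * w x := by
    intro S hS hSw x a
    rw [hu₁fix a x, hu₂fix a x]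
    calc _ ≤ (min L₁ L₂ * S + D₁) * ∫ y, w y ∂(κ₁ a x) + M * W1 (κ₁ a x) (κ₂ a x) :=
          abs_integral_sub_integral_le_add_mul_W1 hL₁ hL₂ hD₁₀ hS hM hf₁lip hf₂lip hD₁ hSw hg
            (hwint₁ a x) (hu₁int a x) (hmom₁ a x) (hmom₂ a x)
      _ ≤ (min L₁ L₂ * S + D₁) * (c * w x) + M * (D₂ * w x) := by
          gcongr
          exacts [hwbd₁ a x, hD₂ a x]
      _ = _ := by ring
  have hq : c * min L₁ L₂ < 1 := by nlinarith [min_le_left L₁ L₂]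
  have hM' : M / (1 - c * min L₁ L₂) ≤ K / ((1 - η * L₂) * (1 - c * L₂)) := by
    rw [← div_div]
    gcongr
    exact min_le_right _ _
  calc |u₁ x a - u₂ x a| ≤ (c * D₁ + M * D₂) / (1 - c * min L₁ L₂) * w x :=
        abs_le_div_one_sub_mul_of_bound_improves (g := fun x a => u₁ x a - u₂ x a) hwpos hq
          (exists_abs_sub_le_mul hu₁bdd hu₂bdd) hstep x a
    _ ≤ _ := by
        rw [add_div, add_mul, mul_div_right_comm c, mul_div_right_comm M]
        gcongr
        exact (hwpos x).le

/-- **Combined stability of stochastic fixed point equations in the nonlinearity and the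
kernels.** If `u₁, u₂` are the unique `w`-bounded solutions of the fixed point equations for
nonlinearities `f₁, f₂` and kernels `κ₁, κ₂` respectively, then the weighted distance of
`u₁` and `u₂` is controlled by the weighted distance of the nonlinearities plus the weighted
Wasserstein-1 distance of the kernels. -/
theorem stmt_3 {d : ℕ} {A : Type*} [Fintype A] [Nonempty A]
    (η c K L₁ L₂ : ℝ) (hη : 0 ≤ η) (hc : 0 ≤ c) (hK : 0 ≤ K)
    (hL₁ : 0 ≤ L₁) (hL₂ : 0 ≤ L₂)
    (hcL₁ : c * L₁ < 1) (hcL₂ : c * L₂ < 1) (hηL₂ : η * L₂ < 1)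
    (w : EuclideanSpace ℝ (Fin d) → ℝ) (hw : Measurable w) (hwpos : ∀ x, 0 < w x)
    (f₁ f₂ : EuclideanSpace ℝ (Fin d) → (A → ℝ) → ℝ)
    (hf₁m : Measurable (fun p : EuclideanSpace ℝ (Fin d) × (A → ℝ) => f₁ p.1 p.2))
    (hf₂m : Measurable (fun p : EuclideanSpace ℝ (Fin d) × (A → ℝ) => f₂ p.1 p.2))
    (hf₁lip : ∀ x r s, |f₁ x r - f₁ x s| ≤ L₁ * ⨆ a, |r a - s a|)
    (hf₂lip : ∀ x r s, |f₂ x r - f₂ x s| ≤ L₂ * ⨆ a, |r a - s a|)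
    (hf₂xlip : ∀ x y r, |f₂ x r - f₂ y r| ≤ K * ‖x - y‖)
    (κ₁ κ₂ : A → Kernel (EuclideanSpace ℝ (Fin d)) (EuclideanSpace ℝ (Fin d)))
    (hκ₁ : ∀ a, IsMarkovKernel (κ₁ a)) (hκ₂ : ∀ a, IsMarkovKernel (κ₂ a))
    (hwint₁ : ∀ a x, Integrable w (κ₁ a x)) (hwint₂ : ∀ a x, Integrable w (κ₂ a x))
    (hwbd₁ : ∀ a x, ∫ y, w y ∂(κ₁ a x) ≤ c * w x)
    (hwbd₂ : ∀ a x, ∫ y, w y ∂(κ₂ a x) ≤ c * w x)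
    (hf₁0int : ∀ a x, Integrable (fun y => f₁ y 0) (κ₁ a x))
    (hf₂0int : ∀ a x, Integrable (fun y => f₂ y 0) (κ₂ a x))
    (hf₁0bd : ∃ C, ∀ a x, ∫ y, |f₁ y 0| ∂(κ₁ a x) ≤ C * w x)
    (hf₂0bd : ∃ C, ∀ a x, ∫ y, |f₂ y 0| ∂(κ₂ a x) ≤ C * w x)
    (hmom₁ : ∀ a x, Integrable (fun y => ‖y‖) (κ₁ a x))
    (hmom₂ : ∀ a x, Integrable (fun y => ‖y‖) (κ₂ a x))
    (hmombd₁ : ∃ C, ∀ a x, ∫ y, ‖y‖ ∂(κ₁ a x) ≤ C * w x)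
    (hmombd₂ : ∃ C, ∀ a x, ∫ y, ‖y‖ ∂(κ₂ a x) ≤ C * w x)
    (hκ₂lip : ∀ a x y, W1 (κ₂ a x) (κ₂ a y) ≤ η * ‖x - y‖)
    (u₁ u₂ : EuclideanSpace ℝ (Fin d) → A → ℝ)
    (hu₁m : ∀ a, Measurable fun x => u₁ x a)
    (hu₂m : ∀ a, Measurable fun x => u₂ x a)
    (hu₁bdd : ∃ C, ∀ x a, |u₁ x a| ≤ C * w x)
    (hu₂bdd : ∃ C, ∀ x a, |u₂ x a| ≤ C * w x)
    (hu₁int : ∀ a x, Integrable (fun y => f₁ y (u₁ y)) (κ₁ a x))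
    (hu₂int : ∀ a x, Integrable (fun y => f₂ y (u₂ y)) (κ₂ a x))
    (hu₁fix : ∀ a x, u₁ x a = ∫ y, f₁ y (u₁ y) ∂(κ₁ a x))
    (hu₂fix : ∀ a x, u₂ x a = ∫ y, f₂ y (u₂ y) ∂(κ₂ a x))
    (D₁ : ℝ) (hD₁ : ∀ y r, |f₁ y r - f₂ y r| ≤ D₁ * w y)
    (D₂ : ℝ) (hD₂ : ∀ b y, W1 (κ₁ b y) (κ₂ b y) ≤ D₂ * w y) :
    ∀ x a, |u₁ x a - u₂ x a| ≤
      c / (1 - c * min L₁ L₂) * D₁ * w x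
        + K / ((1 - η * L₂) * (1 - c * L₂)) * D₂ * w x :=
  stmt_3_general η c K L₁ L₂ hη hc hK hL₁ hL₂ hcL₁ hcL₂ hηL₂ w hwpos f₁ f₂ hf₁lip hf₂lip hf₂xlip κ₁
    κ₂ hκ₁ hκ₂ hwint₁ hwint₂ hwbd₁ hwbd₂ hmom₁ hmom₂ hκ₂lip u₁ u₂ hu₁bdd hu₂bdd hu₁int hu₂int hu₁fix
    hu₂fix D₁ hD₁ D₂ hD₂
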